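/- arXiv:1706.10166 — 7 statements merged into one kernel-verified Lean document; each statement's English description precedes it below -/
import Mathlib

section
/- Let X be a set with a K-quasi-metric d (K ≥ 1), and let w,x,y,z ∈ X. Set a = d(w,x)d(y,z), b = d(w,y)d(x,z), c = d(w,z)d(x,y). Then c ≤ K²·max(a,b). -/
private lemma mul_le_KK {K c1 c2 t u : ℝ} (h1 : c1 ≤ K * t) (h2 : c2 ≤ K * u)
    (hc1 : 0 ≤ c1) (hc2 : 0 ≤ c2) : c1 * c2 ≤ K ^ 2 * (t * u) := by
  have := mul_le_mul h1 h2 hc2 (le_trans hc1 h1)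
  nlinarith

set_option maxHeartbeats 2000000 in
/-- For a K-quasi-metric d and any four points, the product
d(w,z)d(x,y) is bounded by K² times the maximum of the other two cross-ratio
products. -/
theorem quasimetric_corner_bound {X : Type*} (d : X → X → ℝ) (K : ℝ)
    (hK : 1 ≤ K)
    (hnonneg : ∀ x y, 0 ≤ d x y)
    (hzero : ∀ x y, d x y = 0 ↔ x = y)
    (hsymm : ∀ x y, d x y = d y x)
    (hquasi : ∀ x y z, d x z ≤ K * max (d x y) (d y z))
    (w x y z : X) :
    d w z * d x y ≤ K ^ 2 * max (d w x * d y z) (d w y * d x z) := by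
  have hK0 : (0:ℝ) ≤ K := le_trans zero_le_one hK
  have h1 := hquasi w x z
  have h2 := hquasi w y z
  have h3 := hquasi x w y
  have h4 := hquasi x z y
  rw [hsymm x w] at h3
  rw [hsymm z y] at h4
  have hA : d w x * d y z ≤ max (d w x * d y z) (d w y * d x z) := le_max_left _ _
  have hB : d w y * d x z ≤ max (d w x * d y z) (d w y * d x z) := le_max_right _ _
  have nwz := hnonneg w z
  have nxy := hnonneg x y
  have nwx := hnonneg w x
  have nxz := hnonneg x z
  have nwy := hnonneg w y
  have nyz := hnonneg y z
  have key : ∀ t u : ℝ, d w z ≤ K * t → d x y ≤ K * u →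
      t * u ≤ max (d w x * d y z) (d w y * d x z) →
      d w z * d x y ≤ K ^ 2 * max (d w x * d y z) (d w y * d x z) := by
    intro t u ht hu htu
    calc d w z * d x y ≤ K ^ 2 * (t * u) := mul_le_KK ht hu nwz nxy
    _ ≤ K ^ 2 * max (d w x * d y z) (d w y * d x z) := by
        apply mul_le_mul_of_nonneg_left htu (by positivity)
  rcases le_total (d w x) (d x z) with hpq | hpq <;>
  rcases le_total (d w y) (d y z) with hrs | hrs <;>
  rcases le_total (d w x) (d w y) with hpr | hpr <;>
  rcases le_total (d x z) (d y z) with hqs | hqs <;>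
  simp only [max_eq_left, max_eq_right, sup_of_le_left, sup_of_le_right,
    hpq, hrs, hpr, hqs] at h1 h2 h3 h4 <;>
  first
  | (refine key _ _ h1 h3 ?_; nlinarith)
  | (refine key _ _ h1 h4 ?_; nlinarith)
  | (refine key _ _ h2 h3 ?_; nlinarith)
  | (refine key _ _ h2 h4 ?_; nlinarith)
end

section
/- Let (X,d) be a metric space with at least three points and let M be the family of semi-metrics d_A indexed by non-degenerate triples A = (ω,α,β), where d_A(x,y) = (d(x,y)/(d(x,ω)d(ω,y)))·(d(α,ω)d(ω,β)/d(α,β)). Then the topology generated by the open balls of all d_A (over all non-degenerate triples A, radii r > 0, and centers y ≠ ω) equals the metric topology of d. -/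
open ENNReal

noncomputable section

/-- The semi-metric `d_A` associated to a triple `A = (ω,α,β)` in a metric
space, valued in `ℝ≥0∞` with the convention `a/0 = ∞` for `a > 0`. -/
def dTriple {X : Type*} [MetricSpace X] (ω α β x y : X) : ℝ≥0∞ :=
  (ENNReal.ofReal (dist x y) / (ENNReal.ofReal (dist x ω) * ENNReal.ofReal (dist ω y))) *
    (ENNReal.ofReal (dist α ω) * ENNReal.ofReal (dist ω β) / ENNReal.ofReal (dist α β))

section Aux

variable {X : Type*} [MetricSpace X]

lemma dTriple_eq_ofReal {ω α β x y : X} (hx : x ≠ ω) (hy : y ≠ ω) (hαβ : α ≠ β) :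
    dTriple ω α β x y =
      ENNReal.ofReal ((dist x y / (dist x ω * dist ω y)) *
        (dist α ω * dist ω β / dist α β)) := by
  have h1 : (0:ℝ) < dist x ω := dist_pos.2 hx
  have h2 : (0:ℝ) < dist ω y := dist_pos.2 (Ne.symm hy)
  have h3 : (0:ℝ) < dist α β := dist_pos.2 hαβ
  rw [ENNReal.ofReal_mul (by positivity), ENNReal.ofReal_div_of_pos (by positivity),
    ENNReal.ofReal_div_of_pos h3, ENNReal.ofReal_mul dist_nonneg,
    ENNReal.ofReal_mul dist_nonneg]
  rfl

lemma dTriple_omega {ω α β y : X} (hωα : ω ≠ α) (hωβ : ω ≠ β) (hy : y ≠ ω) :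
    dTriple ω α β ω y = ⊤ := by
  have h1 : ENNReal.ofReal (dist ω y) ≠ 0 :=
    ne_of_gt (ENNReal.ofReal_pos.2 (dist_pos.2 (Ne.symm hy)))
  have hC : (ENNReal.ofReal (dist α ω) * ENNReal.ofReal (dist ω β) /
      ENNReal.ofReal (dist α β)) ≠ 0 := by
    apply ne_of_gt
    apply ENNReal.div_pos
    · exact mul_ne_zero (ne_of_gt (ENNReal.ofReal_pos.2 (dist_pos.2 (Ne.symm hωα))))
        (ne_of_gt (ENNReal.ofReal_pos.2 (dist_pos.2 hωβ)))
    · exact ENNReal.ofReal_ne_top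
  unfold dTriple
  rw [dist_self, ENNReal.ofReal_zero, zero_mul, ENNReal.div_zero h1, ENNReal.top_mul hC]

lemma dTriple_self {ω α β x : X} : dTriple ω α β x x = 0 := by
  simp [dTriple, dist_self]

lemma isOpen_gen {ω α β y : X} (hωα : ω ≠ α) (hωβ : ω ≠ β) (hαβ : α ≠ β)
    (hy : y ≠ ω) {r : ℝ} (hr : 0 < r) :
    IsOpen {x : X | dTriple ω α β x y < ENNReal.ofReal r} := by
  have hset : {x : X | dTriple ω α β x y < ENNReal.ofReal r}
      = {x : X | x ≠ ω} ∩ (fun x : X => (dist x y / (dist x ω * dist ω y)) *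
          (dist α ω * dist ω β / dist α β)) ⁻¹' Set.Iio r := by
    ext x
    by_cases hx : x = ω
    · subst hx
      simp [dTriple_omega hωα hωβ hy]
    · simp only [Set.mem_setOf_eq, Set.mem_inter_iff, Set.mem_preimage, Set.mem_Iio,
        dTriple_eq_ofReal hx hy hαβ, ENNReal.ofReal_lt_ofReal_iff hr]
      tauto
  rw [hset]
  apply ContinuousOn.isOpen_inter_preimage _ isOpen_ne isOpen_Iio
  apply ContinuousOn.mul _ continuousOn_const
  apply ContinuousOn.div
  · exact (continuous_id.dist continuous_const).continuousOn
  · exact ((continuous_id.dist continuous_const).mul continuous_const).continuousOn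
  · intro x hx
    have h1 : (0:ℝ) < dist x ω := dist_pos.2 hx
    have h2 : (0:ℝ) < dist ω y := dist_pos.2 (Ne.symm hy)
    positivity

omit [MetricSpace X] in
lemma exists_pair (a b c : X) (hab : a ≠ b) (hac : a ≠ c) (hbc : b ≠ c) (ω : X) :
    ∃ α β : X, ω ≠ α ∧ ω ≠ β ∧ α ≠ β := by
  by_cases h1 : ω = a
  · exact ⟨b, c, h1 ▸ hab, h1 ▸ hac, hbc⟩
  · by_cases h2 : ω = b
    · subst h2; exact ⟨a, c, Ne.symm hab, hbc, hac⟩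
    · exact ⟨a, b, h1, h2, hab⟩

lemma exists_gen (a b c : X) (hab : a ≠ b) (hac : a ≠ c) (hbc : b ≠ c)
    (x : X) (ε : ℝ) (hε : 0 < ε) :
    ∃ V ∈ {S : Set X | ∃ (ω α β y : X) (r : ℝ), ω ≠ α ∧ ω ≠ β ∧ α ≠ β ∧ y ≠ ω ∧ 0 < r ∧
        S = {x : X | dTriple ω α β x y < ENNReal.ofReal r}},
      x ∈ V ∧ V ⊆ Metric.ball x ε := by
  obtain ⟨ω, hωx⟩ : ∃ ω : X, ω ≠ x := by
    by_cases h : a = x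
    · exact ⟨b, fun hb => hab (h.trans hb.symm)⟩
    · exact ⟨a, h⟩
  obtain ⟨α, β, hωα, hωβ, hαβ⟩ := exists_pair a b c hab hac hbc ω
  set D : ℝ := dist x ω with hD
  have hD0 : 0 < D := dist_pos.2 (Ne.symm hωx)
  set Cr : ℝ := dist α ω * dist ω β / dist α β with hCr
  have hC0 : 0 < Cr :=
    div_pos (mul_pos (dist_pos.2 (Ne.symm hωα)) (dist_pos.2 hωβ)) (dist_pos.2 hαβ)
  set r : ℝ := ε * Cr / ((ε + D) * D) with hrdef
  have hr0 : 0 < r := div_pos (mul_pos hε hC0) (mul_pos (by linarith) hD0)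
  refine ⟨{z : X | dTriple ω α β z x < ENNReal.ofReal r},
    ⟨ω, α, β, x, r, hωα, hωβ, hαβ, Ne.symm hωx, hr0, rfl⟩, ?_, ?_⟩
  · show dTriple ω α β x x < ENNReal.ofReal r
    rw [dTriple_self]
    exact ENNReal.ofReal_pos.2 hr0
  · intro z hz
    simp only [Set.mem_setOf_eq] at hz
    rw [Metric.mem_ball]
    by_contra hcon
    push_neg at hcon
    have ht : ε ≤ dist z x := hcon
    by_cases hzω : z = ω
    · subst hzω
      rw [dTriple_omega hωα hωβ (Ne.symm hωx)] at hz
      exact (not_top_lt hz)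
    · rw [dTriple_eq_ofReal hzω (Ne.symm hωx) hαβ] at hz
      have hflt : (dist z x / (dist z ω * dist ω x)) * Cr < r :=
        (ENNReal.ofReal_lt_ofReal_iff hr0).1 hz
      have hdzω : 0 < dist z ω := dist_pos.2 hzω
      have htri : dist z ω ≤ dist z x + D := by
        rw [hD]; exact dist_triangle z x ω
      have hkey : r ≤ (dist z x / (dist z ω * dist ω x)) * Cr := by
        rw [dist_comm ω x, ← hD, div_mul_eq_mul_div,
          div_le_div_iff₀ (mul_pos (show (0:ℝ) < ε + D by linarith) hD0) (mul_pos hdzω hD0)]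
        have h1 : ε * dist z ω ≤ dist z x * (ε + D) := by nlinarith
        nlinarith [mul_le_mul_of_nonneg_right h1 (mul_pos hC0 hD0).le]
      exact absurd hflt (not_lt.2 hkey)

end Aux

/-- For a metric space with at least three points, the Möbius
topology (generated by the open balls of all the semi-metrics d_A over all
non-degenerate triples A, positive radii, and centers ≠ ω) coincides with the
metric topology. -/
theorem mobius_topology_eq_metric_topology {X : Type*} [MetricSpace X]
    (hcard : ∃ a b c : X, a ≠ b ∧ a ≠ c ∧ b ≠ c) :
    TopologicalSpace.generateFrom
      {S : Set X | ∃ (ω α β y : X) (r : ℝ), ω ≠ α ∧ ω ≠ β ∧ α ≠ β ∧ y ≠ ω ∧ 0 < r ∧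
        S = {x : X | dTriple ω α β x y < ENNReal.ofReal r}} =
    (inferInstance : TopologicalSpace X) := by
  obtain ⟨a, b, c, hab, hac, hbc⟩ := hcard
  set G := {S : Set X | ∃ (ω α β y : X) (r : ℝ), ω ≠ α ∧ ω ≠ β ∧ α ≠ β ∧ y ≠ ω ∧ 0 < r ∧
      S = {x : X | dTriple ω α β x y < ENNReal.ofReal r}} with hG
  apply le_antisymm
  · -- generateFrom G ≤ metric : every metric-open set is generate-open
    rw [TopologicalSpace.le_def]
    intro U hU
    have hUnion : U = ⋃₀ {V | V ∈ G ∧ V ⊆ U} := by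
      apply Set.Subset.antisymm
      · intro x hx
        obtain ⟨ε, hε, hball⟩ := Metric.isOpen_iff.1 hU x hx
        obtain ⟨V, hVmem, hxV, hVsub⟩ := exists_gen a b c hab hac hbc x ε hε
        exact ⟨V, ⟨hVmem, hVsub.trans hball⟩, hxV⟩
      · rintro x ⟨V, ⟨_, hVU⟩, hxV⟩
        exact hVU hxV
    rw [hUnion]
    exact TopologicalSpace.GenerateOpen.sUnion _
      (fun V hV => TopologicalSpace.GenerateOpen.basic V hV.1)
  · -- metric ≤ generateFrom G : every generator is metric-open
    apply le_generateFrom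
    rintro S ⟨ω, α, β, y, r, hωα, hωβ, hαβ, hy, hr, rfl⟩
    exact isOpen_gen hωα hωβ hαβ hy hr

end
end

section
/- Let (X,d) be a metric space and let (x_n) be a Cauchy sequence in X. Let y, z ∈ X be distinct points such that neither d(x_n,y) → 0 nor d(x_n,z) → 0. Then d(x_n,x_m)·d(y,z)/(d(x_n,y)·d(x_m,z)) → 0 as n,m → ∞. -/
/-! The distances from a Cauchy sequence to a fixed point form a real Cauchy sequence, so they
converge, and for `y` and `z` to nonzero limits by hypothesis; since `d(xₙ, xₘ) → 0`, the ratio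
tends to `0 · d(y, z) / (L · M) = 0`. -/

open Filter Topology

lemma CauchySeq.exists_tendsto_dist {X β : Type*} [PseudoMetricSpace X] [Preorder β]
    {x : β → X} (hx : CauchySeq x) (y : X) :
    ∃ L, Tendsto (fun n => dist (x n) y) atTop (𝓝 L) :=
  cauchySeq_tendsto_of_complete <|
    (LipschitzWith.dist_left y).uniformContinuous.comp_cauchySeq hx

lemma CauchySeq.exists_tendsto_dist_ne_zero {X β : Type*} [PseudoMetricSpace X] [Preorder β]
    {x : β → X} (hx : CauchySeq x) {y : X}
    (hy : ¬ Tendsto (fun n => dist (x n) y) atTop (𝓝 0)) :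
    ∃ L ≠ 0, Tendsto (fun n => dist (x n) y) atTop (𝓝 L) := by
  obtain ⟨L, hL⟩ := hx.exists_tendsto_dist y
  exact ⟨L, fun hL0 => hy (hL0 ▸ hL), hL⟩

lemma CauchySeq.tendsto_dist_prod_atTop {X : Type*} [PseudoMetricSpace X] {x : ℕ → X}
    (hx : CauchySeq x) :
    Tendsto (fun p : ℕ × ℕ => dist (x p.1) (x p.2)) (atTop ×ˢ atTop) (𝓝 0) := by
  rw [prod_atTop_atTop_eq]
  exact cauchySeq_iff_tendsto_dist_atTop_0.mp hx

theorem cauchy_crt_component_tendsto_zero_general {X : Type*} [MetricSpace X]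
    (x : ℕ → X) (hx : CauchySeq x) (y z : X)
    (hy : ¬ Tendsto (fun n => dist (x n) y) atTop (nhds 0))
    (hz : ¬ Tendsto (fun n => dist (x n) z) atTop (nhds 0)) :
    Tendsto
      (fun p : ℕ × ℕ =>
        dist (x p.1) (x p.2) * dist y z / (dist (x p.1) y * dist (x p.2) z))
      (atTop ×ˢ atTop) (nhds 0) := by
  obtain ⟨L, hL0, hL⟩ := hx.exists_tendsto_dist_ne_zero hy
  obtain ⟨M, hM0, hM⟩ := hx.exists_tendsto_dist_ne_zero hz
  have hnum := hx.tendsto_dist_prod_atTop.mul_const (dist y z)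
  have hden := (hL.comp tendsto_fst).mul (hM.comp tendsto_snd)
  simpa [Pi.div_def] using hnum.div hden (mul_ne_zero hL0 hM0)

/-- For a Cauchy sequence in a metric space and a good pair (y,z),
the c-component ratio of the cross-ratio triple tends to 0. -/
theorem cauchy_crt_component_tendsto_zero {X : Type*} [MetricSpace X]
    (x : ℕ → X) (hx : CauchySeq x) (y z : X) (hyz : y ≠ z)
    (hy : ¬ Tendsto (fun n => dist (x n) y) atTop (nhds 0))
    (hz : ¬ Tendsto (fun n => dist (x n) z) atTop (nhds 0)) :
    Tendsto
      (fun p : ℕ × ℕ =>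
        dist (x p.1) (x p.2) * dist y z / (dist (x p.1) y * dist (x p.2) z))
      (atTop ×ˢ atTop) (nhds 0) :=
  cauchy_crt_component_tendsto_zero_general x hx y z hy hz
end

section
/- Let d be a K-quasi-metric on a set X (possibly with a point ω at infinity), let (x_n) be a sequence in X, and let y, z ∈ X \ {ω} be distinct with d(x_n,y) ↛ 0 and d(x_n,z) ↛ 0. Suppose (d(x_n,x_m)·d(y,z))/(d(x_n,y)·d(x_m,z)) → 0 as n,m → ∞, and suppose there exists x ∈ X \ {ω} and B > 0 with d(x_n,x) < B for all n. Then d(x_n,x') is bounded for every x' ∈ X \ {ω}, and d(x_n,x_m) → 0 as n,m → ∞. -/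
open Filter ENNReal

/-- Bounded case of the auxiliary lemma for Möbius-Cauchy
sequences: if the c-component ratio tends to 0 and the sequence is bounded from
one finite point, then it is bounded from every finite point and
d(x_n,x_m) → 0. -/
theorem mobius_cauchy_bounded_case {X : Type*} (d : X → X → ℝ≥0∞) (K : ℝ≥0∞)
    (hK : 1 ≤ K) (hKfin : K ≠ ⊤)
    (hsymm : ∀ x y, d x y = d y x)
    (hzero : ∀ x y, d x y = 0 ↔ x = y)
    (hquasi : ∀ x y z, d x z ≤ K * max (d x y) (d y z))
    (ω : X)
    (hω : ∀ x, x ≠ ω → d x ω = ⊤)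
    (hfin : ∀ x y, x ≠ ω → y ≠ ω → d x y ≠ ⊤)
    (x : ℕ → X) (y z : X) (hyz : y ≠ z) (hyω : y ≠ ω) (hzω : z ≠ ω)
    (hy : ¬ Tendsto (fun n => d (x n) y) atTop (nhds 0))
    (hz : ¬ Tendsto (fun n => d (x n) z) atTop (nhds 0))
    (hc : Tendsto
      (fun p : ℕ × ℕ => d (x p.1) (x p.2) * d y z / (d (x p.1) y * d (x p.2) z))
      (atTop ×ˢ atTop) (nhds 0))
    (hbdd : ∃ (x₀ : X) (B : ℝ≥0∞), x₀ ≠ ω ∧ B ≠ ⊤ ∧ ∀ n, d (x n) x₀ < B) :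
    (∀ x' : X, x' ≠ ω → ∃ B : ℝ≥0∞, B ≠ ⊤ ∧ ∀ n, d (x n) x' ≤ B) ∧
    Tendsto (fun p : ℕ × ℕ => d (x p.1) (x p.2)) (atTop ×ˢ atTop) (nhds 0) := by
  obtain ⟨x₀, B, hx₀, hB, hlt⟩ := hbdd
  have hxn : ∀ n, x n ≠ ω := by
    intro n h
    have := hlt n
    rw [h, hsymm, hω x₀ hx₀] at this
    exact not_top_lt this
  have hbound : ∀ x' : X, x' ≠ ω → ∃ B' : ℝ≥0∞, B' ≠ ⊤ ∧ ∀ n, d (x n) x' ≤ B' := by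
    intro x' hx'
    refine ⟨K * max B (d x₀ x'), ?_, ?_⟩
    · exact ENNReal.mul_ne_top hKfin (by simp [hB, hfin x₀ x' hx₀ hx'])
    · intro n
      calc d (x n) x' ≤ K * max (d (x n) x₀) (d x₀ x') := hquasi _ _ _
        _ ≤ K * max B (d x₀ x') := by gcongr; exact (hlt n).le
  refine ⟨hbound, ?_⟩
  obtain ⟨My, hMy, hMyb⟩ := hbound y hyω
  obtain ⟨Mz, hMz, hMzb⟩ := hbound z hzω
  set M : ℝ≥0∞ := max My Mz + 1 with hM
  have hMtop : M ≠ ⊤ := by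
    simp [hM, ENNReal.add_ne_top, hMy, hMz]
  have hM0 : M ≠ 0 := by
    simp [hM]
  have hMy' : ∀ n, d (x n) y ≤ M := fun n =>
    (hMyb n).trans ((le_max_left _ _).trans le_self_add)
  have hMz' : ∀ n, d (x n) z ≤ M := fun n =>
    (hMzb n).trans ((le_max_right _ _).trans le_self_add)
  have hw0 : d y z ≠ 0 := fun h => hyz ((hzero y z).mp h)
  have hwtop : d y z ≠ ⊤ := hfin y z hyω hzω
  rw [ENNReal.tendsto_nhds_zero] at hc ⊢
  intro ε hε
  set ε' : ℝ≥0∞ := min (ε * d y z / (M * M)) 1 with hε'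
  have hε'0 : 0 < ε' := by
    refine lt_min ?_ zero_lt_one
    apply ENNReal.div_pos
    · exact mul_ne_zero hε.ne' hw0
    · exact ENNReal.mul_ne_top hMtop hMtop
  have hε'top : ε' ≠ ⊤ := (min_le_right _ _).trans_lt (by norm_num) |>.ne
  filter_upwards [hc ε' hε'0] with p hp
  set a := d (x p.1) (x p.2) with ha
  by_cases ha0 : a = 0
  · simp [ha0]
  have hatop : a ≠ ⊤ := hfin _ _ (hxn _) (hxn _)
  set u := d (x p.1) y with hu
  set v := d (x p.2) z with hv
  have hu0 : u ≠ 0 := by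
    intro h
    rw [h] at hp
    simp only [zero_mul, ENNReal.div_zero (mul_ne_zero ha0 hw0)] at hp
    exact hε'top (top_le_iff.mp hp)
  have hv0 : v ≠ 0 := by
    intro h
    rw [h] at hp
    simp only [mul_zero, ENNReal.div_zero (mul_ne_zero ha0 hw0)] at hp
    exact hε'top (top_le_iff.mp hp)
  have huv0 : u * v ≠ 0 := mul_ne_zero hu0 hv0
  have huvtop : u * v ≠ ⊤ :=
    ENNReal.mul_ne_top (((hMy' p.1).trans_lt hMtop.lt_top).ne)
      (((hMz' p.2).trans_lt hMtop.lt_top).ne)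
  rw [ENNReal.div_le_iff huv0 huvtop] at hp
  have key : a * d y z ≤ ε * d y z := by
    calc a * d y z ≤ ε' * (u * v) := hp
      _ ≤ (ε * d y z / (M * M)) * (M * M) := by
          gcongr
          · exact min_le_left _ _
          · exact hMy' p.1
          · exact hMz' p.2
      _ = ε * d y z := ENNReal.div_mul_cancel (mul_ne_zero hM0 hM0)
            (ENNReal.mul_ne_top hMtop hMtop)
  exact (ENNReal.mul_le_mul_iff_left hw0 hwtop).mp key
end

section
/- Let d be a K-quasi-metric on a set X (possibly with a point ω at infinity), let (x_n) be a sequence in X \ {ω}, and let y, z ∈ X \ {ω} be distinct with d(x_n,y) ↛ 0 and d(x_n,z) ↛ 0. Suppose (d(x_n,x_m)·d(y,z))/(d(x_n,y)·d(x_m,z)) → 0 as n,m → ∞. Then exactly one of the following holds: (a) d(x_n, x) is bounded for every x ∈ X \ {ω} and d(x_n,x_m) → 0; or (b) d(x_n, x) → ∞ for every x ∈ X \ {ω}. -/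
/-!
Write `a n = d (x n) y`, `b n = d (x n) z`. Clearing the denominator, the hypothesis says that
for every `ε > 0` eventually `d (x n) (x m) ≤ ε · a n · b m`. If `a n → ∞`, the quasi-triangle
inequality pushes every `d (x n) x'` to `∞`. Otherwise `a m ≤ M` for infinitely many `m`; for such
an `m` beyond the threshold of a suitable `ε`, `b m` is bounded as well and the estimate gives
`2K · d (x n) (x m) ≤ a n` for all large `n`. Plugged into `a n ≤ K · max (d (x n) (x m)) (a m)`,
this forces `a n ≤ K · M`. So `a` and `b` are bounded, by `A` and `B` say, and then
`d (x n) (x m) ≤ ε · A · B` eventually.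
-/

open Filter ENNReal Topology

lemma ENNReal.le_of_le_max_of_two_mul_le {a b c : ℝ≥0∞} (ha : a ≠ ⊤) (h : a ≤ max b c)
    (h2 : 2 * b ≤ a) : a ≤ c := by
  rcases le_max_iff.1 h with hab | hac
  · have hb : b ≠ ⊤ := ne_top_of_le_ne_top ha (le_mul_of_one_le_left' one_le_two |>.trans h2)
    have hb0 : b ≤ 0 := by
      rw [← ENNReal.add_le_add_iff_left hb, add_zero, ← two_mul]
      exact h2.trans hab
    exact hab.trans (hb0.trans zero_le)
  · exact hac

lemma ENNReal.le_mul_of_div_lt {a b c : ℝ≥0∞} (h : a / b < c) : a ≤ c * b := by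
  rcases eq_or_ne b 0 with rfl | hb
  · rcases eq_or_ne a 0 with rfl | ha
    · exact zero_le
    · simp [ENNReal.div_zero ha] at h
  · exact (ENNReal.div_le_iff_le_mul (Or.inl hb) (Or.inr (pos_of_gt h).ne')).1 h.le

lemma ENNReal.exists_bound_of_eventually_le {f : ℕ → ℝ≥0∞} (hf : ∀ n, f n ≠ ⊤) {C : ℝ≥0∞}
    (hC : C ≠ ⊤) (h : ∀ᶠ n in atTop, f n ≤ C) : ∃ B ≠ ⊤, ∀ n, f n ≤ B := by
  obtain ⟨N, hN⟩ := eventually_atTop.1 h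
  refine ⟨max C ((Finset.range N).sup f), max_ne_top hC ?_, fun n => ?_⟩
  · exact ((Finset.sup_lt_iff bot_lt_top).2 fun i _ => (hf i).lt_top).ne
  · rcases lt_or_ge n N with hn | hn
    · exact (Finset.le_sup (Finset.mem_range.2 hn)).trans (le_max_right _ _)
    · exact (hN n hn).trans (le_max_left _ _)

section QuasiMetric

variable {X : Type*} {d : X → X → ℝ≥0∞} {K : ℝ≥0∞}

theorem tendsto_nhds_top_of_quasi_triangle (hKfin : K ≠ ⊤)
    (hquasi : ∀ x y z, d x z ≤ K * max (d x y) (d y z)) {ι : Type*} {l : Filter ι} {u : ι → X}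
    {y x' : X} (hx' : d x' y ≠ ⊤) (h : Tendsto (fun i => d (u i) y) l (𝓝 ⊤)) :
    Tendsto (fun i => d (u i) x') l (𝓝 ⊤) := by
  refine ENNReal.tendsto_nhds_top fun k => ?_
  have hbound : K * max (k : ℝ≥0∞) (d x' y) ≠ ⊤ := mul_ne_top hKfin (max_ne_top (by simp) hx')
  filter_upwards [h.eventually_const_lt hbound.lt_top] with i hi
  by_contra! hle
  exact hi.not_ge ((hquasi _ x' y).trans (by gcongr))

theorem eventually_le_mul_of_tendsto_cross_ratio {u : ℕ → X} {y z : X} (hyz : d y z ≠ 0)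
    (hyz' : d y z ≠ ⊤)
    (hc : Tendsto (fun p : ℕ × ℕ => d (u p.1) (u p.2) * d y z / (d (u p.1) y * d (u p.2) z))
      (atTop ×ˢ atTop) (𝓝 0)) :
    ∀ ε > 0, ∀ᶠ p : ℕ × ℕ in atTop ×ˢ atTop,
      d (u p.1) (u p.2) ≤ ε * (d (u p.1) y * d (u p.2) z) := by
  intro ε hε
  have hεyz : 0 < ε * d y z := ENNReal.mul_pos hε.ne' hyz
  filter_upwards [hc.eventually_lt_const hεyz] with p hp
  rw [← ENNReal.mul_le_mul_iff_left hyz hyz']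
  calc d (u p.1) (u p.2) * d y z ≤ ε * d y z * (d (u p.1) y * d (u p.2) z) :=
        ENNReal.le_mul_of_div_lt hp
    _ = ε * (d (u p.1) y * d (u p.2) z) * d y z := by ring

variable {u : ℕ → X} {y z : X}
  (hsmall : ∀ ε > 0, ∀ᶠ p : ℕ × ℕ in atTop ×ˢ atTop,
    d (u p.1) (u p.2) ≤ ε * (d (u p.1) y * d (u p.2) z))
include hsmall

theorem eventually_dist_le_of_frequently_le (hKfin : K ≠ ⊤)
    (hquasi : ∀ x y z, d x z ≤ K * max (d x y) (d y z)) (hyz : d y z ≠ ⊤) (huy : ∀ n, d (u n) y ≠ ⊤)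
    {M : ℝ≥0∞} (hM : M ≠ ⊤) (hfreq : ∃ᶠ n in atTop, d (u n) y ≤ M) :
    ∀ᶠ n in atTop, d (u n) y ≤ K * M := by
  set M' := K * max M (d y z)
  have hM' : M' ≠ ⊤ := mul_ne_top hKfin (max_ne_top hM hyz)
  set ε := (2 * K * M')⁻¹
  have hε : 0 < ε := ENNReal.inv_pos.2 (mul_ne_top (mul_ne_top ofNat_ne_top hKfin) hM')
  have hε_small := hsmall ε hε
  rw [prod_atTop_atTop_eq] at hε_small
  obtain ⟨N, hN⟩ := eventually_atTop_prod_self'.1 hε_small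
  obtain ⟨m, hmN, hm⟩ := frequently_atTop.1 hfreq N
  have hzm : d (u m) z ≤ M' := (hquasi _ y z).trans (by simp only [M']; gcongr)
  filter_upwards [eventually_ge_atTop N] with n hn
  have hclose : 2 * (K * d (u n) (u m)) ≤ d (u n) y :=
    calc 2 * (K * d (u n) (u m)) ≤ 2 * K * (ε * (d (u n) y * M')) := by
          rw [← mul_assoc]; gcongr; exact (hN n hn m hmN).trans (by gcongr)
      _ = ε * (2 * K * M') * d (u n) y := by ring
      _ ≤ d (u n) y := mul_le_of_le_one_left' (ENNReal.inv_mul_le_one _)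
  refine ENNReal.le_of_le_max_of_two_mul_le (huy n) ?_ hclose
  calc d (u n) y ≤ K * max (d (u n) (u m)) (d (u m) y) := hquasi _ _ _
    _ ≤ K * max (d (u n) (u m)) M := by gcongr
    _ = max (K * d (u n) (u m)) (K * M) := mul_max _ _ _

theorem tendsto_dist_zero_of_bounded {A B : ℝ≥0∞} (hA : A ≠ ⊤) (hB : B ≠ ⊤)
    (huy : ∀ n, d (u n) y ≤ A) (huz : ∀ n, d (u n) z ≤ B) :
    Tendsto (fun p : ℕ × ℕ => d (u p.1) (u p.2)) (atTop ×ˢ atTop) (𝓝 0) := by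
  refine ENNReal.tendsto_nhds_zero.2 fun ε hε => ?_
  filter_upwards [hsmall (ε / (A * B)) (ENNReal.div_pos hε.ne' (mul_ne_top hA hB))] with p hp
  calc d (u p.1) (u p.2) ≤ ε / (A * B) * (d (u p.1) y * d (u p.2) z) := hp
    _ ≤ ε / (A * B) * (A * B) := by gcongr <;> simp only [huy, huz]
    _ = A * B * (ε / (A * B)) := mul_comm _ _
    _ ≤ ε := mul_div_le

end QuasiMetric

theorem mobius_cauchy_dichotomy_general {X : Type*} (d : X → X → ℝ≥0∞) (K : ℝ≥0∞)
    (hKfin : K ≠ ⊤)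
    (hzero : ∀ x y, d x y = 0 ↔ x = y)
    (hquasi : ∀ x y z, d x z ≤ K * max (d x y) (d y z))
    (ω : X)
    (hfin : ∀ x y, x ≠ ω → y ≠ ω → d x y ≠ ⊤)
    (x : ℕ → X) (hxω : ∀ n, x n ≠ ω)
    (y z : X) (hyz : y ≠ z) (hyω : y ≠ ω) (hzω : z ≠ ω)
    (hc : Tendsto
      (fun p : ℕ × ℕ => d (x p.1) (x p.2) * d y z / (d (x p.1) y * d (x p.2) z))
      (atTop ×ˢ atTop) (nhds 0)) :
    Xor'
      ((∀ x' : X, x' ≠ ω → ∃ B : ℝ≥0∞, B ≠ ⊤ ∧ ∀ n, d (x n) x' ≤ B) ∧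
        Tendsto (fun p : ℕ × ℕ => d (x p.1) (x p.2)) (atTop ×ˢ atTop) (nhds 0))
      (∀ x' : X, x' ≠ ω → Tendsto (fun n => d (x n) x') atTop (nhds ⊤)) := by
  have hsmall := eventually_le_mul_of_tendsto_cross_ratio (mt (hzero y z).1 hyz)
    (hfin y z hyω hzω) hc
  have hbound_of_bound_y {A : ℝ≥0∞} (hA : A ≠ ⊤) (hyA : ∀ n, d (x n) y ≤ A) (x' : X)
      (hx' : x' ≠ ω) : ∃ B : ℝ≥0∞, B ≠ ⊤ ∧ ∀ n, d (x n) x' ≤ B :=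
    ⟨K * max A (d y x'), mul_ne_top hKfin (max_ne_top hA (hfin y x' hyω hx')),
      fun n => (hquasi _ y x').trans (by gcongr; exact hyA n)⟩
  refine (xor_iff_or_and_not_and _ _).2 ⟨?_, fun ⟨⟨hbdd, _⟩, hdiv⟩ => ?_⟩
  · by_cases hdiv : Tendsto (fun n => d (x n) y) atTop (𝓝 ⊤)
    · exact Or.inr fun x' hx' =>
        tendsto_nhds_top_of_quasi_triangle hKfin hquasi (hfin x' y hx' hyω) hdiv
    obtain ⟨M, hM⟩ : ∃ M : ℕ, ∃ᶠ n in atTop, d (x n) y ≤ M := by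
      simpa [ENNReal.tendsto_nhds_top_iff_nat, not_eventually, frequently_atTop] using hdiv
    have hxy n : d (x n) y ≠ ⊤ := hfin _ _ (hxω n) hyω
    obtain ⟨A, hA, hyA⟩ := ENNReal.exists_bound_of_eventually_le hxy
      (mul_ne_top hKfin (natCast_ne_top M))
      (eventually_dist_le_of_frequently_le hsmall hKfin hquasi (hfin y z hyω hzω) hxy
        (natCast_ne_top M) hM)
    obtain ⟨B, hB, hzB⟩ := hbound_of_bound_y hA hyA z hzω
    exact Or.inl ⟨hbound_of_bound_y hA hyA, tendsto_dist_zero_of_bounded hsmall hA hB hyA hzB⟩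
  · obtain ⟨B, hB, hyB⟩ := hbdd y hyω
    obtain ⟨n, hn⟩ := ((hdiv y hyω).eventually_const_lt hB.lt_top).exists
    exact (hyB n).not_gt hn

/-- Dichotomy for Möbius-Cauchy sequences with respect to a
K-quasi-metric (possibly with a point ω at infinity): the sequence is either
bounded with d(x_n,x_m) → 0, or it diverges to infinity — and exactly one of
the two alternatives holds. -/
theorem mobius_cauchy_dichotomy {X : Type*} (d : X → X → ℝ≥0∞) (K : ℝ≥0∞)
    (hK : 1 ≤ K) (hKfin : K ≠ ⊤)
    (hsymm : ∀ x y, d x y = d y x)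
    (hzero : ∀ x y, d x y = 0 ↔ x = y)
    (hquasi : ∀ x y z, d x z ≤ K * max (d x y) (d y z))
    (ω : X)
    (hω : ∀ x, x ≠ ω → d x ω = ⊤)
    (hfin : ∀ x y, x ≠ ω → y ≠ ω → d x y ≠ ⊤)
    (x : ℕ → X) (hxω : ∀ n, x n ≠ ω)
    (y z : X) (hyz : y ≠ z) (hyω : y ≠ ω) (hzω : z ≠ ω)
    (hy : ¬ Tendsto (fun n => d (x n) y) atTop (nhds 0))
    (hz : ¬ Tendsto (fun n => d (x n) z) atTop (nhds 0))
    (hc : Tendsto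
      (fun p : ℕ × ℕ => d (x p.1) (x p.2) * d y z / (d (x p.1) y * d (x p.2) z))
      (atTop ×ˢ atTop) (nhds 0)) :
    Xor'
      ((∀ x' : X, x' ≠ ω → ∃ B : ℝ≥0∞, B ≠ ⊤ ∧ ∀ n, d (x n) x' ≤ B) ∧
        Tendsto (fun p : ℕ × ℕ => d (x p.1) (x p.2)) (atTop ×ˢ atTop) (nhds 0))
      (∀ x' : X, x' ≠ ω → Tendsto (fun n => d (x n) x') atTop (nhds ⊤)) :=
  mobius_cauchy_dichotomy_general d K hKfin hzero hquasi ω hfin x hxω y z hyz hyω hzω hc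
end

section
/- Let d be a K-quasi-metric on X, let (x_n) be a sequence, and let y, z and y', z' be two good pairs for (x_n) (i.e., each pair consists of two distinct finite points with d(x_n,·) not converging to 0 for either point). If d(x_n,x) is bounded for all finite x and d(x_n,x_m) → 0 as n,m → ∞, then (d(x_n,x_m)·d(y',z'))/(d(x_n,y')·d(x_m,z')) → 0 as n,m → ∞. -/
/-!
If `d(xₙ, a)` does not tend to `0`, it exceeds some `ε > 0` infinitely often; once the terms of
the Cauchy sequence are within `ε / K` of each other, the quasi-triangle inequality through any
later `xₙ` forbids `d(xₙ, a) < ε / K`. So both denominators of the cross-ratio stay bounded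
below, `d(y', z')` is finite, and the ratio is squeezed to `0` by `d(xₙ, xₘ)`.
-/

open Filter ENNReal Topology

section QuasiMetric

variable {X : Type*} {d : X → X → ℝ≥0∞} {K : ℝ≥0∞}

theorem eventually_le_of_frequently_lt
    (hquasi : ∀ x y z, d x z ≤ K * max (d x y) (d y z))
    {x : ℕ → X} {a : X} {ε δ : ℝ≥0∞} (hKδ : K * δ ≤ ε)
    (hcauchy : ∀ᶠ p : ℕ × ℕ in atTop ×ˢ atTop, d (x p.1) (x p.2) < δ)
    (hfreq : ∃ᶠ n in atTop, ε < d (x n) a) :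
    ∀ᶠ n in atTop, δ ≤ d (x n) a := by
  rw [prod_atTop_atTop_eq, eventually_atTop_prod_self] at hcauchy
  obtain ⟨N, hN⟩ := hcauchy
  filter_upwards [eventually_ge_atTop N] with n hn
  by_contra! hclose
  obtain ⟨m, hm, hfar⟩ := frequently_atTop.mp hfreq N
  have := calc
    d (x m) a ≤ K * max (d (x m) (x n)) (d (x n) a) := hquasi _ _ _
    _ ≤ K * δ := by gcongr; exact max_le (hN m n hm hn).le hclose.le
    _ ≤ ε := hKδ
  exact (hfar.trans_le this).false

theorem exists_pos_eventually_le_of_not_tendsto_zero (hKfin : K ≠ ⊤)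
    (hquasi : ∀ x y z, d x z ≤ K * max (d x y) (d y z)) {x : ℕ → X} {a : X}
    (hcauchy : Tendsto (fun p : ℕ × ℕ => d (x p.1) (x p.2)) (atTop ×ˢ atTop) (𝓝 0))
    (ha : ¬ Tendsto (fun n => d (x n) a) atTop (𝓝 0)) :
    ∃ δ > 0, ∀ᶠ n in atTop, δ ≤ d (x n) a := by
  rw [ENNReal.tendsto_nhds_zero] at ha
  push Not at ha
  obtain ⟨ε, hε, hfreq⟩ := ha
  have hδ : 0 < ε / K := ENNReal.div_pos hε.ne' hKfin
  exact ⟨ε / K, hδ, eventually_le_of_frequently_lt hquasi ENNReal.mul_div_le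
    (hcauchy.eventually_lt_const hδ) hfreq⟩

end QuasiMetric

theorem ENNReal.tendsto_mul_div_zero_of_eventually_le {α : Type*} {l : Filter α}
    {f g : α → ℝ≥0∞} {c δ : ℝ≥0∞} (hf : Tendsto f l (𝓝 0)) (hc : c ≠ ⊤) (hδ : δ ≠ 0)
    (hg : ∀ᶠ i in l, δ ≤ g i) :
    Tendsto (fun i => f i * c / g i) l (𝓝 0) := by
  have hbound : Tendsto (fun i => f i * (c / δ)) l (𝓝 0) := by
    simpa using ENNReal.Tendsto.mul_const hf (Or.inr (ENNReal.div_ne_top hc hδ))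
  refine tendsto_of_tendsto_of_tendsto_of_le_of_le' tendsto_const_nhds hbound
    (Eventually.of_forall fun _ => zero_le) ?_
  filter_upwards [hg] with i hi
  rw [mul_div_assoc]
  gcongr

theorem mobius_cauchy_good_pair_bounded_general {X : Type*} (d : X → X → ℝ≥0∞) (K : ℝ≥0∞)
    (hKfin : K ≠ ⊤)
    (hquasi : ∀ x y z, d x z ≤ K * max (d x y) (d y z))
    (ω : X)
    (hfin : ∀ x y, x ≠ ω → y ≠ ω → d x y ≠ ⊤)
    (x : ℕ → X)
    (y z : X)
    (y' z' : X) (hyω' : y' ≠ ω) (hzω' : z' ≠ ω)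
    (hy' : ¬ Tendsto (fun n => d (x n) y') atTop (nhds 0))
    (hz' : ¬ Tendsto (fun n => d (x n) z') atTop (nhds 0))
    (hcauchy : Tendsto (fun p : ℕ × ℕ => d (x p.1) (x p.2))
      (atTop ×ˢ atTop) (nhds 0)) :
    Tendsto
      (fun p : ℕ × ℕ => d (x p.1) (x p.2) * d y' z' / (d (x p.1) y' * d (x p.2) z'))
      (atTop ×ˢ atTop) (nhds 0) := by
  obtain ⟨δ₁, hδ₁, hy'_far⟩ :=
    exists_pos_eventually_le_of_not_tendsto_zero hKfin hquasi hcauchy hy'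
  obtain ⟨δ₂, hδ₂, hz'_far⟩ :=
    exists_pos_eventually_le_of_not_tendsto_zero hKfin hquasi hcauchy hz'
  have hfar : ∀ᶠ p : ℕ × ℕ in atTop ×ˢ atTop, δ₁ * δ₂ ≤ d (x p.1) y' * d (x p.2) z' := by
    filter_upwards [hy'_far.prod_inl atTop, hz'_far.prod_inr atTop] with p h₁ h₂
    exact mul_le_mul' h₁ h₂
  exact ENNReal.tendsto_mul_div_zero_of_eventually_le hcauchy (hfin _ _ hyω' hzω')
    (mul_ne_zero hδ₁.ne' hδ₂.ne') hfar

/-- Case 1 of the good-pair independence lemma: for a bounded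
sequence with d(x_n,x_m) → 0, the c-component ratio tends to 0 for every good
pair (y',z'). -/
theorem mobius_cauchy_good_pair_bounded {X : Type*} (d : X → X → ℝ≥0∞) (K : ℝ≥0∞)
    (hK : 1 ≤ K) (hKfin : K ≠ ⊤)
    (hsymm : ∀ x y, d x y = d y x)
    (hzero : ∀ x y, d x y = 0 ↔ x = y)
    (hquasi : ∀ x y z, d x z ≤ K * max (d x y) (d y z))
    (ω : X)
    (hω : ∀ x, x ≠ ω → d x ω = ⊤)
    (hfin : ∀ x y, x ≠ ω → y ≠ ω → d x y ≠ ⊤)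
    (x : ℕ → X)
    (y z : X) (hyz : y ≠ z) (hyω : y ≠ ω) (hzω : z ≠ ω)
    (hy : ¬ Tendsto (fun n => d (x n) y) atTop (nhds 0))
    (hz : ¬ Tendsto (fun n => d (x n) z) atTop (nhds 0))
    (y' z' : X) (hyz' : y' ≠ z') (hyω' : y' ≠ ω) (hzω' : z' ≠ ω)
    (hy' : ¬ Tendsto (fun n => d (x n) y') atTop (nhds 0))
    (hz' : ¬ Tendsto (fun n => d (x n) z') atTop (nhds 0))
    (hbdd : ∀ x' : X, x' ≠ ω → ∃ B : ℝ≥0∞, B ≠ ⊤ ∧ ∀ n, d (x n) x' ≤ B)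
    (hcauchy : Tendsto (fun p : ℕ × ℕ => d (x p.1) (x p.2))
      (atTop ×ˢ atTop) (nhds 0)) :
    Tendsto
      (fun p : ℕ × ℕ => d (x p.1) (x p.2) * d y' z' / (d (x p.1) y' * d (x p.2) z'))
      (atTop ×ˢ atTop) (nhds 0) :=
  mobius_cauchy_good_pair_bounded_general d K hKfin hquasi ω hfin x y z y' z' hyω' hzω' hy' hz'
    hcauchy
end

section
/- Let d be a K-quasi-metric on X and let (x_n) be a sequence with d(x_n, x) → ∞ for all finite x ∈ X. Then for any two distinct finite points y', z' ∈ X, (d(x_n,x_m)·d(y',z'))/(d(x_n,y')·d(x_m,z')) → 0 as n,m → ∞. Specifically, once d(x_n,y') ≥ d(y',z') and d(x_m,z') ≥ d(y',z'), one has (d(x_n,x_m)·d(y',z'))/(d(x_n,y')·d(x_m,z')) ≤ K²·d(y',z')/min(d(x_n,y'), d(x_m,z')). -/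
open Filter ENNReal Topology

/-!
Two applications of the quasi-triangle inequality, through `y'` and then `z'`, give
`d(xₙ, xₘ) ≤ K² · max(d(xₙ, y'), d(xₘ, z'))` as soon as `d(xₘ, z') ≥ d(y', z')`.
Dividing by `d(xₙ, y') · d(xₘ, z') = max · min` leaves `K² · d(y', z') / min(d(xₙ, y'), d(xₘ, z'))`,
which tends to `0` because both distances tend to `∞` while `K² · d(y', z')` is finite.
-/

theorem ENNReal.div_mul_le_div_min_of_le_max_mul {a b t u : ℝ≥0∞} (ha : a ≠ 0) (hb : b ≠ 0)
    (h : u ≤ max a b * t) : u / (a * b) ≤ t / min a b := by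
  by_cases htop : a = ⊤ ∨ b = ⊤
  · have hab : a * b = ⊤ := by rcases htop with h | h <;> simp [h, ha, hb]
    simp [hab]
  obtain ⟨hat, hbt⟩ := not_or.1 htop
  calc u / (a * b) ≤ max a b * t / (max a b * min a b) := by rw [max_mul_min]; gcongr
    _ = t / min a b :=
      ENNReal.mul_div_mul_left _ _ (by simp [ha]) (by simp [hat, hbt])

section QuasiMetric

variable {X : Type*} {d : X → X → ℝ≥0∞} {K : ℝ≥0∞}

theorem quasi_dist_le_sq_mul_max (hK : 1 ≤ K) (hsymm : ∀ x y, d x y = d y x)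
    (hquasi : ∀ x y z, d x z ≤ K * max (d x y) (d y z)) {v w y z : X} (h : d y z ≤ d w z) :
    d v w ≤ K ^ 2 * max (d v y) (d w z) := by
  have hyw : d y w ≤ K * d w z := by
    simpa [hsymm z w, max_eq_right h] using hquasi y z w
  calc d v w ≤ K * max (d v y) (d y w) := hquasi v y w
    _ ≤ K * max (K * d v y) (K * d w z) := by gcongr; exact le_mul_of_one_le_left' hK
    _ = K ^ 2 * max (d v y) (d w z) := by rw [← mul_max, ← mul_assoc, sq]

theorem quasi_cross_ratio_le (hK : 1 ≤ K) (hsymm : ∀ x y, d x y = d y x)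
    (hquasi : ∀ x y z, d x z ≤ K * max (d x y) (d y z)) {v w y z : X} (hyz : d y z ≠ 0)
    (hv : d y z ≤ d v y) (hw : d y z ≤ d w z) :
    d v w * d y z / (d v y * d w z) ≤ K ^ 2 * d y z / min (d v y) (d w z) := by
  refine ENNReal.div_mul_le_div_min_of_le_max_mul (ne_bot_of_le_ne_bot hyz hv)
    (ne_bot_of_le_ne_bot hyz hw) ?_
  calc d v w * d y z ≤ K ^ 2 * max (d v y) (d w z) * d y z := by
        gcongr; exact quasi_dist_le_sq_mul_max hK hsymm hquasi hw
    _ = max (d v y) (d w z) * (K ^ 2 * d y z) := by ring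

end QuasiMetric

theorem mobius_cauchy_good_pair_diverging_general {X : Type*} (d : X → X → ℝ≥0∞) (K : ℝ≥0∞)
    (hK : 1 ≤ K) (hKfin : K ≠ ⊤)
    (hsymm : ∀ x y, d x y = d y x)
    (hzero : ∀ x y, d x y = 0 ↔ x = y)
    (hquasi : ∀ x y z, d x z ≤ K * max (d x y) (d y z))
    (ω : X)
    (hfin : ∀ x y, x ≠ ω → y ≠ ω → d x y ≠ ⊤)
    (x : ℕ → X)
    (hdiv : ∀ x' : X, x' ≠ ω → Tendsto (fun n => d (x n) x') atTop (nhds ⊤))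
    (y' z' : X) (hyz' : y' ≠ z') (hyω' : y' ≠ ω) (hzω' : z' ≠ ω) :
    Tendsto
      (fun p : ℕ × ℕ => d (x p.1) (x p.2) * d y' z' / (d (x p.1) y' * d (x p.2) z'))
      (atTop ×ˢ atTop) (nhds 0) ∧
    ∀ n m : ℕ, d y' z' ≤ d (x n) y' → d y' z' ≤ d (x m) z' →
      d (x n) (x m) * d y' z' / (d (x n) y' * d (x m) z') ≤
        K ^ 2 * d y' z' / min (d (x n) y') (d (x m) z') := by
  have hbound n m := quasi_cross_ratio_le (v := x n) (w := x m) hK hsymm hquasi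
    (mt (hzero y' z').1 hyz')
  refine ⟨?_, hbound⟩
  have hc : d y' z' < ⊤ := (hfin _ _ hyω' hzω').lt_top
  have hy := hdiv y' hyω'
  have hz := hdiv z' hzω'
  have hmin : Tendsto (fun p : ℕ × ℕ => min (d (x p.1) y') (d (x p.2) z'))
      (atTop ×ˢ atTop) (𝓝 ⊤) := by
    simpa using (hy.comp tendsto_fst).min (hz.comp tendsto_snd)
  have hlim : Tendsto (fun p : ℕ × ℕ => K ^ 2 * d y' z' / min (d (x p.1) y') (d (x p.2) z'))
      (atTop ×ˢ atTop) (𝓝 0) := by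
    simpa using ENNReal.Tendsto.const_div hmin (Or.inr (mul_ne_top (pow_ne_top hKfin) hc.ne))
  refine tendsto_of_tendsto_of_tendsto_of_le_of_le' tendsto_const_nhds hlim
    (.of_forall fun _ => zero_le) ?_
  filter_upwards [(hy.eventually_const_le hc).prod_inl atTop,
    (hz.eventually_const_le hc).prod_inr atTop] with p hp hq
  exact hbound p.1 p.2 hp hq

/-- Case 2 of the good-pair independence lemma: for a sequence
diverging to infinity, the c-component ratio tends to 0 for any two distinct
finite points y', z'; moreover the explicit bound
K²·d(y',z')/min(d(x_n,y'),d(x_m,z')) holds once both distances exceed d(y',z'). -/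
theorem mobius_cauchy_good_pair_diverging {X : Type*} (d : X → X → ℝ≥0∞) (K : ℝ≥0∞)
    (hK : 1 ≤ K) (hKfin : K ≠ ⊤)
    (hsymm : ∀ x y, d x y = d y x)
    (hzero : ∀ x y, d x y = 0 ↔ x = y)
    (hquasi : ∀ x y z, d x z ≤ K * max (d x y) (d y z))
    (ω : X)
    (hω : ∀ x, x ≠ ω → d x ω = ⊤)
    (hfin : ∀ x y, x ≠ ω → y ≠ ω → d x y ≠ ⊤)
    (x : ℕ → X)
    (hdiv : ∀ x' : X, x' ≠ ω → Tendsto (fun n => d (x n) x') atTop (nhds ⊤))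
    (y' z' : X) (hyz' : y' ≠ z') (hyω' : y' ≠ ω) (hzω' : z' ≠ ω) :
    Tendsto
      (fun p : ℕ × ℕ => d (x p.1) (x p.2) * d y' z' / (d (x p.1) y' * d (x p.2) z'))
      (atTop ×ˢ atTop) (nhds 0) ∧
    ∀ n m : ℕ, d y' z' ≤ d (x n) y' → d y' z' ≤ d (x m) z' →
      d (x n) (x m) * d y' z' / (d (x n) y' * d (x m) z') ≤
        K ^ 2 * d y' z' / min (d (x n) y') (d (x m) z') :=
  mobius_cauchy_good_pair_diverging_general d K hK hKfin hsymm hzero hquasi ω hfin x hdiv y' z' hyz'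
    hyω' hzω'
end
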